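/- Let r > 0 be real, x > 0 rational, and B the 3×3 matrix with rows (x, r, 0), (0, x, r), (1, 0, x). Then lim_{n→∞} (B^n)_{2,1}/(B^n)_{3,1} = r^{1/3} and lim_{n→∞} (B^n)_{1,1}/(B^n)_{3,1} = r^{2/3}. -/

import Mathlib

open Matrix Filter Real
open Topology

/-!
The rows `(1, ρ, ρ²)` with `ρ³ = r` are left eigenvectors of `B`, with eigenvalues `x + ρ²`.
Taking `ρ = y ωʲ`, where `y = r^{1/3}` and `ω` is a primitive cube root of unity,
discrete Fourier inversion gives `3 yᵏ (Bⁿ)ₖ₀ = ∑ⱼ ω^{2jk} (x + y²ω^{2j})ⁿ`.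
As `x, y > 0`, the real eigenvalue `x + y²` strictly dominates the other two in modulus,
so `(Bⁿ)ₖ₀ ~ (x + y²)ⁿ / (3 yᵏ)`, and the ratios of the first column tend to `y` and `y²`.
-/

def bMatrix {R : Type*} [Zero R] [One R] (x r : R) : Matrix (Fin 3) (Fin 3) R :=
  !![x, r, 0; 0, x, r; 1, 0, x]

theorem bMatrix_map {R S : Type*} [Semiring R] [Semiring S] (f : R →+* S) (x r : R) :
    (bMatrix x r).map f = bMatrix (f x) (f r) := by
  ext i j; fin_cases i <;> fin_cases j <;> simp [bMatrix]

theorem ofReal_bMatrix_pow_apply (x r : ℝ) (n : ℕ) (i j : Fin 3) :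
    (((bMatrix x r ^ n) i j : ℝ) : ℂ) = (bMatrix (x : ℂ) r ^ n) i j := by
  simpa [bMatrix_map] using congrArg (· i j) (Matrix.map_pow (bMatrix x r) Complex.ofRealHom n)

theorem Matrix.vecMul_pow_eq_pow_smul {n R : Type*} [Fintype n] [DecidableEq n] [CommSemiring R]
    {A : Matrix n n R} {v : n → R} {c : R} (h : v ᵥ* A = c • v) (k : ℕ) :
    v ᵥ* A ^ k = c ^ k • v := by
  induction k with
  | zero => simp
  | succ k ih => rw [pow_succ, ← vecMul_vecMul, ih, smul_vecMul, h, smul_smul, pow_succ]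

section CommRing

variable {R : Type*} [CommRing R]

theorem powers_vecMul_bMatrix {x r ρ : R} (hρ : ρ ^ 3 = r) :
    (fun i : Fin 3 => ρ ^ (i : ℕ)) ᵥ* bMatrix x r =
      (x + ρ ^ 2) • fun i : Fin 3 => ρ ^ (i : ℕ) := by
  ext j; fin_cases j <;> simp [vecMul, dotProduct, Fin.sum_univ_three, bMatrix, ← hρ] <;> ring

theorem sum_pow_mul_bMatrix_pow_apply {x r ρ : R} (hρ : ρ ^ 3 = r) (n : ℕ) :
    ∑ i : Fin 3, ρ ^ (i : ℕ) * (bMatrix x r ^ n) i 0 = (x + ρ ^ 2) ^ n := by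
  simpa [vecMul, dotProduct] using
    congrFun (vecMul_pow_eq_pow_smul (powers_vecMul_bMatrix hρ) n) 0

theorem three_mul_pow_mul_eq_sum {ω : R} (hω : ω ^ 2 + ω + 1 = 0) (y : R) (v : Fin 3 → R)
    (k : Fin 3) :
    3 * (y ^ (k : ℕ) * v k) =
      ∑ j : Fin 3, ω ^ (2 * k * j : ℕ) * ∑ i : Fin 3, (y * ω ^ (j : ℕ)) ^ (i : ℕ) * v i := by
  fin_cases k <;> simp [Fin.sum_univ_three] <;> grind

theorem three_mul_pow_mul_bMatrix_pow_apply {ω : R} (hω : ω ^ 2 + ω + 1 = 0) (x y : R) (n : ℕ)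
    (k : Fin 3) :
    3 * (y ^ (k : ℕ) * (bMatrix x (y ^ 3) ^ n) k 0) =
      ∑ j : Fin 3, ω ^ (2 * k * j : ℕ) * (x + (y * ω ^ (j : ℕ)) ^ 2) ^ n := by
  have hω3 : ω ^ 3 = 1 := by linear_combination (ω - 1) * hω
  have hcube (j : ℕ) : (y * ω ^ j) ^ 3 = y ^ 3 := by
    rw [mul_pow, ← pow_mul, mul_comm j, pow_mul, hω3, one_pow, mul_one]
  refine (three_mul_pow_mul_eq_sum hω y (fun i => (bMatrix x (y ^ 3) ^ n) i 0) k).trans ?_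
  simp only [sum_pow_mul_bMatrix_pow_apply (hcube _)]

end CommRing

theorem tendsto_sum_mul_pow_div_pow {ι 𝕜 : Type*} [Fintype ι] [DecidableEq ι] [NormedField 𝕜]
    (c μ : ι → 𝕜) {i₀ : ι} (h₀ : μ i₀ ≠ 0) (hdom : ∀ i ≠ i₀, ‖μ i‖ < ‖μ i₀‖) :
    Tendsto (fun n : ℕ => (∑ i, c i * μ i ^ n) / μ i₀ ^ n) atTop (𝓝 (c i₀)) := by
  have hterm (i : ι) :
      Tendsto (fun n : ℕ => c i * (μ i / μ i₀) ^ n) atTop (𝓝 (if i = i₀ then c i else 0)) := by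
    split_ifs with hi
    · subst hi; simp [div_self h₀]
    · simpa using (tendsto_pow_atTop_nhds_zero_of_norm_lt_one (by
        rw [norm_div, div_lt_one (norm_pos_iff.mpr h₀)]; exact hdom i hi)).const_mul (c i)
  convert tendsto_finsetSum Finset.univ fun i _ => hterm i using 1
  · ext n; simp [Finset.sum_div, div_pow, mul_div_assoc]
  · simp

theorem tendsto_div_of_tendsto_div_common {α 𝕜 : Type*} [NormedField 𝕜] {l : Filter α}
    {f g d : α → 𝕜} {a b : 𝕜} (hd : ∀ n, d n ≠ 0) (hf : Tendsto (fun n => f n / d n) l (𝓝 a))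
    (hg : Tendsto (fun n => g n / d n) l (𝓝 b)) (hb : b ≠ 0) :
    Tendsto (fun n => f n / g n) l (𝓝 (a / b)) :=
  (hf.div hg hb).congr fun n => div_div_div_cancel_right₀ (hd n) _ _

theorem Complex.norm_ofReal_add_mul_lt {x c : ℝ} (hx : 0 < x) (hc : 0 < c) {z : ℂ}
    (hz : ‖z‖ = 1) (hz1 : z ≠ 1) : ‖(x : ℂ) + c * z‖ < x + c := by
  have hsq : z.re ^ 2 + z.im ^ 2 = 1 := by
    have h := Complex.sq_norm z
    rw [hz, Complex.normSq_apply] at h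
    linear_combination -h
  have hre : z.re < 1 := by
    refine (Complex.re_le_norm z).trans_eq hz |>.lt_of_ne fun h => hz1 (Complex.ext h ?_)
    simpa [h] using hsq
  refine lt_of_pow_lt_pow_left₀ 2 (by positivity) ?_
  rw [Complex.sq_norm, Complex.normSq_apply]
  simp only [Complex.add_re, Complex.add_im, Complex.mul_re, Complex.mul_im, Complex.ofReal_re,
    Complex.ofReal_im]
  nlinarith [mul_pos (mul_pos hx hc) (sub_pos.mpr hre), congrArg (c ^ 2 * ·) hsq]

theorem IsPrimitiveRoot.norm_add_sq_mul_pow_lt {ω : ℂ} (hω : IsPrimitiveRoot ω 3) {x y : ℝ}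
    (hx : 0 < x) (hy : 0 < y) {j : Fin 3} (hj : j ≠ 0) :
    ‖(x : ℂ) + (y * ω ^ (j : ℕ)) ^ 2‖ < x + y ^ 2 := by
  have hsq : ((y : ℂ) * ω ^ (j : ℕ)) ^ 2 = ((y ^ 2 : ℝ) : ℂ) * ω ^ (2 * j : ℕ) := by
    rw [mul_pow, ← pow_mul, mul_comm _ 2]; push_cast; rfl
  rw [hsq]
  refine Complex.norm_ofReal_add_mul_lt hx (by positivity)
    (by rw [norm_pow, hω.norm'_eq_one (by norm_num), one_pow]) ?_
  rw [Ne, hω.pow_eq_one_iff_dvd]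
  fin_cases j <;> simp_all

theorem tendsto_bMatrix_pow_apply_div_pow {x y : ℝ} (hx : 0 < x) (hy : 0 < y) (k : Fin 3) :
    Tendsto (fun n : ℕ => (bMatrix x (y ^ 3) ^ n) k 0 / (x + y ^ 2) ^ n) atTop
      (𝓝 (3 * y ^ (k : ℕ))⁻¹) := by
  obtain ⟨ω, hω⟩ : ∃ ω : ℂ, IsPrimitiveRoot ω 3 :=
    ⟨_, Complex.isPrimitiveRoot_exp 3 (by norm_num)⟩
  have hω₀ : ω ^ 2 + ω + 1 = 0 := by
    have h := hω.geom_sum_eq_zero (by norm_num)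
    simp only [Finset.sum_range_succ, Finset.sum_range_zero] at h
    linear_combination h
  let μ : Fin 3 → ℂ := fun j => x + (y * ω ^ (j : ℕ)) ^ 2
  have hμ₀ : μ 0 = ((x + y ^ 2 : ℝ) : ℂ) := by simp [μ]
  have hdom (j : Fin 3) (hj : j ≠ 0) : ‖μ j‖ < ‖μ 0‖ := by
    rw [hμ₀, Complex.norm_real, Real.norm_of_nonneg (by positivity)]
    exact hω.norm_add_sq_mul_pow_lt hx hy hj
  have hμ₀_ne : μ 0 ≠ 0 := by rw [hμ₀]; exact Complex.ofReal_ne_zero.mpr (by positivity)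
  have hlim := (tendsto_sum_mul_pow_div_pow (fun j : Fin 3 => ω ^ (2 * k * j : ℕ)) μ hμ₀_ne
    hdom).div_const (3 * (y : ℂ) ^ (k : ℕ))
  rw [← tendsto_ofReal_iff]
  convert hlim using 1
  · ext n
    rw [hμ₀, ← three_mul_pow_mul_bMatrix_pow_apply hω₀ (x : ℂ) (y : ℂ) n k]
    push_cast
    rw [ofReal_bMatrix_pow_apply, Complex.ofReal_pow]
    have hy' : (y : ℂ) ≠ 0 := Complex.ofReal_ne_zero.mpr hy.ne'
    field_simp
  · simp

/-- For the matrix `B` with rows `(x,r,0),(0,x,r),(1,0,x)`, `r > 0`, `x > 0`,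
ratios of entries of `Bⁿ` converge to `r^{1/3}` and `r^{2/3}`. -/
theorem b_matrix_tendsto (r : ℝ) (hr : 0 < r) (x : ℚ) (hx : 0 < x)
    (B : Matrix (Fin 3) (Fin 3) ℝ)
    (hB : B = !![(x : ℝ), r, 0; 0, (x : ℝ), r; 1, 0, (x : ℝ)]) :
    Tendsto (fun n : ℕ => (B ^ n) 1 0 / (B ^ n) 2 0) atTop (nhds (r ^ ((1 : ℝ) / 3))) ∧
    Tendsto (fun n : ℕ => (B ^ n) 0 0 / (B ^ n) 2 0) atTop (nhds (r ^ ((2 : ℝ) / 3))) := by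
  set y := r ^ ((1 : ℝ) / 3) with hy_def
  have hy : 0 < y := rpow_pos_of_pos hr _
  have hr3 : r = y ^ 3 := by rw [hy_def, ← rpow_natCast, ← rpow_mul hr.le]; norm_num
  have hr23 : r ^ ((2 : ℝ) / 3) = y ^ 2 := by
    rw [hy_def, ← rpow_natCast, ← rpow_mul hr.le]; norm_num
  have hB' : B = bMatrix (x : ℝ) (y ^ 3) := by rw [hB, ← hr3]; rfl
  have hlim := tendsto_bMatrix_pow_apply_div_pow (by exact_mod_cast hx : (0 : ℝ) < x) hy
  have hΛ (n : ℕ) : ((x : ℝ) + y ^ 2) ^ n ≠ 0 := by positivity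
  have hg : (3 * y ^ ((2 : Fin 3) : ℕ))⁻¹ ≠ 0 := by positivity
  rw [hr23, hB']
  constructor
  · convert tendsto_div_of_tendsto_div_common hΛ (hlim 1) (hlim 2) hg using 2
    field_simp
    norm_num [pow_succ]
  · convert tendsto_div_of_tendsto_div_common hΛ (hlim 0) (hlim 2) hg using 2
    field_simp
    norm_num [pow_succ]
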